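/- Let D and K be vector spaces over ℂ and H = D × K. For F ∈ End(H), write F^{DD} : D → D, F^{DK} : K → D, F^{KD} : D → K, F^{KK} : K → K for the block components of F with respect to the canonical injections and projections. For F ∈ End(H) and A ∈ Hom(D, K), define L_F(A) := −F^{KD} − F^{KK} ∘ A + A ∘ F^{DD} + A ∘ F^{DK} ∘ A, and define the directional derivative of L_F at A in direction B ∈ Hom(D,K) by δ_A L_F(B) := −F^{KK} ∘ B + B ∘ F^{DD} + B ∘ F^{DK} ∘ A + A ∘ F^{DK} ∘ B. Then for all F, G ∈ End(H) and all A ∈ Hom(D,K): δ_A L_G(L_F(A)) − δ_A L_F(L_G(A)) = L_{[F,G]}(A), where [F,G] = F ∘ G − G ∘ F. (This is the identity expressing that F ↦ L_F defines an action of the Lie algebra End(H) by vector fields on the affine chart Hom(D,K).) -/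

import Mathlib

/-!
Write `ι_A = (id, A) : D → D × K` for the graph embedding and `π_A : D × K → K` for the
projection along its image. Then `L_F(A) = -π_A F ι_A` and
`δ_A L_F(B) = B fst F ι_A - π_A F inr B`. Inserting `ι_A fst + inr π_A = 1` into the terms
`π_A G inr π_A F ι_A`, all cross terms cancel and what is left is `-π_A [F, G] ι_A`.
-/

section

variable {D K : Type*} [AddCommGroup D] [Module ℂ D] [AddCommGroup K] [Module ℂ K]

/-- The block component `F^{DD} : D → D` of `F ∈ End(D × K)`. -/
noncomputable def blockDD (F : (D × K) →ₗ[ℂ] (D × K)) : D →ₗ[ℂ] D :=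
  LinearMap.fst ℂ D K ∘ₗ F ∘ₗ LinearMap.inl ℂ D K

/-- The block component `F^{DK} : K → D` of `F ∈ End(D × K)`. -/
noncomputable def blockDK (F : (D × K) →ₗ[ℂ] (D × K)) : K →ₗ[ℂ] D :=
  LinearMap.fst ℂ D K ∘ₗ F ∘ₗ LinearMap.inr ℂ D K

/-- The block component `F^{KD} : D → K` of `F ∈ End(D × K)`. -/
noncomputable def blockKD (F : (D × K) →ₗ[ℂ] (D × K)) : D →ₗ[ℂ] K :=
  LinearMap.snd ℂ D K ∘ₗ F ∘ₗ LinearMap.inl ℂ D K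

/-- The block component `F^{KK} : K → K` of `F ∈ End(D × K)`. -/
noncomputable def blockKK (F : (D × K) →ₗ[ℂ] (D × K)) : K →ₗ[ℂ] K :=
  LinearMap.snd ℂ D K ∘ₗ F ∘ₗ LinearMap.inr ℂ D K

/-- The vector field of the `𝔤𝔩`-action in the chart `Hom(D,K)` of the Sato Grassmannian:
`L_F(A) = −F^{KD} − F^{KK} ∘ A + A ∘ F^{DD} + A ∘ F^{DK} ∘ A`. -/
noncomputable def glFlow (F : (D × K) →ₗ[ℂ] (D × K)) (A : D →ₗ[ℂ] K) : D →ₗ[ℂ] K :=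
  -blockKD F - blockKK F ∘ₗ A + A ∘ₗ blockDD F + A ∘ₗ blockDK F ∘ₗ A

/-- The directional derivative of `A ↦ L_F(A)` at `A` in direction `B`:
`δ_A L_F(B) = −F^{KK} ∘ B + B ∘ F^{DD} + B ∘ F^{DK} ∘ A + A ∘ F^{DK} ∘ B`. -/
noncomputable def glFlowDeriv (F : (D × K) →ₗ[ℂ] (D × K)) (A B : D →ₗ[ℂ] K) :
    D →ₗ[ℂ] K :=
  -(blockKK F ∘ₗ B) + B ∘ₗ blockDD F + B ∘ₗ blockDK F ∘ₗ A + A ∘ₗ blockDK F ∘ₗ B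

end

open LinearMap

section GraphChart

variable {R : Type*} [Ring R] {D K M N : Type*} [AddCommGroup D] [Module R D]
  [AddCommGroup K] [Module R K] [AddCommGroup M] [Module R M] [AddCommGroup N] [Module R N]

/-- The projection of `D × K` onto `K` along the graph of `A`. -/
def graphProj (A : D →ₗ[R] K) : D × K →ₗ[R] K :=
  coprod (-A) LinearMap.id

theorem id_prod_eq_inl_add_inr_comp (A : D →ₗ[R] K) :
    LinearMap.id.prod A = inl R D K + inr R D K ∘ₗ A := by
  ext x <;> simp

theorem graphProj_eq_snd_sub_comp_fst (A : D →ₗ[R] K) :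
    graphProj A = snd R D K - A ∘ₗ fst R D K := by
  ext x <;> simp [graphProj, sub_eq_neg_add]

theorem id_prod_comp_fst_add_inr_comp_graphProj (A : D →ₗ[R] K) :
    LinearMap.id.prod A ∘ₗ fst R D K + inr R D K ∘ₗ graphProj A = LinearMap.id := by
  ext x <;> simp [graphProj]

theorem comp_inr_comp_graphProj_comp (A : D →ₗ[R] K) (P : D × K →ₗ[R] M)
    (Q : N →ₗ[R] D × K) :
    P ∘ₗ inr R D K ∘ₗ graphProj A ∘ₗ Q =
      P ∘ₗ Q - P ∘ₗ LinearMap.id.prod A ∘ₗ fst R D K ∘ₗ Q := by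
  have h := congrArg (P ∘ₗ · ∘ₗ Q) (id_prod_comp_fst_add_inr_comp_graphProj A)
  simp only [add_comp, comp_add, comp_assoc, id_comp] at h
  rw [← h, add_sub_cancel_left]

end GraphChart

section

variable {D K : Type*} [AddCommGroup D] [Module ℂ D] [AddCommGroup K] [Module ℂ K]

theorem glFlow_eq_neg_graphProj_comp (F : (D × K) →ₗ[ℂ] (D × K)) (A : D →ₗ[ℂ] K) :
    glFlow F A = -(graphProj A ∘ₗ F ∘ₗ LinearMap.id.prod A) := by
  simp only [glFlow, blockDD, blockDK, blockKD, blockKK, graphProj_eq_snd_sub_comp_fst,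
    id_prod_eq_inl_add_inr_comp, comp_add, sub_comp, comp_assoc]
  abel

theorem glFlowDeriv_eq (F : (D × K) →ₗ[ℂ] (D × K)) (A B : D →ₗ[ℂ] K) :
    glFlowDeriv F A B =
      B ∘ₗ fst ℂ D K ∘ₗ F ∘ₗ LinearMap.id.prod A - graphProj A ∘ₗ F ∘ₗ inr ℂ D K ∘ₗ B := by
  simp only [glFlowDeriv, blockDD, blockDK, blockKK, graphProj_eq_snd_sub_comp_fst,
    id_prod_eq_inl_add_inr_comp, comp_add, sub_comp, comp_assoc]
  abel

/-- The identity expressing that `F ↦ L_F` defines an action of the Lie algebra `End(D × K)`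
by vector fields on the affine chart `Hom(D,K)`: for all `F, G` and all `A`,
`δ_A L_G(L_F(A)) − δ_A L_F(L_G(A)) = L_{[F,G]}(A)`, where `[F,G] = F ∘ G − G ∘ F`. -/
theorem glFlow_bracket (F G : (D × K) →ₗ[ℂ] (D × K)) (A : D →ₗ[ℂ] K) :
    glFlowDeriv G A (glFlow F A) - glFlowDeriv F A (glFlow G A) =
      glFlow (F ∘ₗ G - G ∘ₗ F) A := by
  simp only [glFlowDeriv_eq, glFlow_eq_neg_graphProj_comp, neg_comp, comp_neg, comp_assoc,
    comp_inr_comp_graphProj_comp, sub_comp, comp_sub]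
  abel

end
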